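/- arXiv:2410.07948 — 7 statements merged into one kernel-verified Lean document; each statement's English description precedes it below -/
import Mathlib

section
/- Let m ≥ 2 and let R be the 2m×2m block-circulant matrix R = (1/2)·circulant(J, O, …, O, Y), where the blocks are 2×2, J is the all-ones 2×2 block, O the zero block, and Y = 2I − J. Then R is a regular orthogonal matrix of level 2: RᵀR = I₂ₘ, R·1 = 1, and 2R is an integer matrix while R is not. -/
open Matrix

/-- The `2m×2m` block-circulant matrix `(1/2)·circulant(J, O, …, O, Y)` with `2×2` blocks,
`J` all-ones, `Y = 2I − J`: its `(i,j)`-block is `J/2` if `(j−i) ≡ 0 (mod m)`,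
`Y/2` if `(j−i) ≡ m−1 (mod m)`, and `O` otherwise. -/
noncomputable def Rcirc (m : ℕ) : Matrix (Fin (2*m)) (Fin (2*m)) ℝ :=
  Matrix.of fun i j =>
    if ((j : ℕ)/2 + m - (i : ℕ)/2) % m = 0 then 1/2
    else if ((j : ℕ)/2 + m - (i : ℕ)/2) % m = m - 1 then
      (if (i : ℕ) % 2 = (j : ℕ) % 2 then 1/2 else -(1/2))
    else 0

/-!
Reindex `Fin (2m)` as `Fin m × Fin 2` (block, position in block). Then
`R = 1 ⊗ (J/2) + P ⊗ (Y/2)` with `P` the cyclic shift permutation matrix. Since `J/2` and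
`Y/2 = I − J/2` are complementary orthogonal projections, `Rᵀ R = 1 ⊗ (J/2 + Y/2) = 1`;
and since `J 1 = 2·1`, `Y 1 = 0`, the rows of `R` sum to `1`.
-/

open scoped Kronecker

namespace Matrix

variable {l n R : Type*} [Fintype l] [Fintype n] [CommRing R]

theorem transpose_permMatrix_mul_self [DecidableEq n] (σ : Equiv.Perm n) :
    (σ.permMatrix R)ᵀ * σ.permMatrix R = 1 := by
  rw [transpose_permMatrix, ← permMatrix_mul, mul_inv_cancel, permMatrix_one]

theorem transpose_mul_self_one_kronecker_add_kronecker [DecidableEq l] [DecidableEq n]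
    {Q : Matrix l l R} {A B : Matrix n n R} (hQ : Qᵀ * Q = 1) (hAB : Aᵀ * B = 0)
    (hAB_one : Aᵀ * A + Bᵀ * B = 1) :
    (1 ⊗ₖ A + Q ⊗ₖ B)ᵀ * (1 ⊗ₖ A + Q ⊗ₖ B) = 1 := by
  have hBA : Bᵀ * A = 0 := by
    rw [← transpose_transpose A, ← transpose_mul, hAB, transpose_zero]
  simp only [transpose_add, ← kroneckerMap_transpose, transpose_one, add_mul, mul_add,
    ← mul_kronecker_mul, hQ, hAB, hBA, one_mul, mul_one, kronecker_zero, add_zero, zero_add,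
    ← kronecker_add, hAB_one, one_kronecker_one]

theorem kronecker_mulVec_one (M : Matrix l l R) (N : Matrix n n R) :
    (M ⊗ₖ N) *ᵥ 1 = fun p => (M *ᵥ 1) p.1 * (N *ᵥ 1) p.2 := by
  ext ⟨a, r⟩
  simp [mulVec, dotProduct, Fintype.sum_prod_type, Finset.sum_mul_sum]

theorem one_kronecker_add_kronecker_mulVec_one [DecidableEq l] {Q : Matrix l l R}
    {A B : Matrix n n R} (hA : A *ᵥ 1 = 1) (hB : B *ᵥ 1 = 0) :
    (1 ⊗ₖ A + Q ⊗ₖ B) *ᵥ 1 = 1 := by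
  ext p
  simp [add_mulVec, kronecker_mulVec_one, hA, hB]

end Matrix

theorem Fin.val_sub_eq_mod {m : ℕ} (a c : Fin m) : ((c - a : Fin m) : ℕ) = (c + m - a) % m := by
  rw [Fin.val_sub]
  congr 1
  omega

theorem Fin.val_sub_eq_zero_iff {n : ℕ} (a c : Fin (n + 2)) :
    ((c - a : Fin (n + 2)) : ℕ) = 0 ↔ a = c := by
  rw [Fin.val_eq_zero_iff, sub_eq_zero, eq_comm]

theorem Fin.val_sub_eq_pred_iff {n : ℕ} (a c : Fin (n + 2)) :
    ((c - a : Fin (n + 2)) : ℕ) = n + 2 - 1 ↔ a - 1 = c := by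
  rw [show n + 2 - 1 = ((-1 : Fin (n + 2)) : ℕ) from Fin.coe_neg_one.symm, ← Fin.ext_iff,
    sub_eq_iff_eq_add, neg_add_eq_sub, eq_comm]

def blockIndex (m : ℕ) : Fin (2 * m) ≃ Fin m × Fin 2 :=
  (finCongr (mul_comm 2 m)).trans finProdFinEquiv.symm

@[simp]
theorem blockIndex_fst_val {m : ℕ} (i : Fin (2 * m)) : ((blockIndex m i).1 : ℕ) = i / 2 := rfl

@[simp]
theorem blockIndex_snd_val {m : ℕ} (i : Fin (2 * m)) : ((blockIndex m i).2 : ℕ) = i % 2 := rfl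

noncomputable def halfJ : Matrix (Fin 2) (Fin 2) ℝ := of fun _ _ => 1 / 2

noncomputable def halfY : Matrix (Fin 2) (Fin 2) ℝ :=
  of fun r s => if r = s then 1 / 2 else -(1 / 2)

theorem halfJ_transpose_mul_halfY : halfJᵀ * halfY = 0 := by
  ext i j
  fin_cases i <;> fin_cases j <;> norm_num [halfJ, halfY, mul_apply]

theorem halfJ_transpose_mul_self_add_halfY_transpose_mul_self :
    halfJᵀ * halfJ + halfYᵀ * halfY = 1 := by
  ext i j
  fin_cases i <;> fin_cases j <;> norm_num [halfJ, halfY, mul_apply]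

theorem halfJ_mulVec_one : halfJ *ᵥ 1 = 1 := by
  ext i
  norm_num [halfJ, mulVec, dotProduct]

theorem halfY_mulVec_one : halfY *ᵥ 1 = 0 := by
  ext i
  fin_cases i <;> norm_num [halfY, mulVec, dotProduct]

/-- `P a c = 1` iff `c = a - 1`: the `Y` blocks sit where `j − i ≡ m − 1`. -/
theorem Rcirc_eq_submatrix (n : ℕ) :
    Rcirc (n + 2) =
      submatrix
        (1 ⊗ₖ halfJ + Equiv.Perm.permMatrix ℝ (Equiv.subRight (1 : Fin (n + 2))) ⊗ₖ halfY)
        (blockIndex (n + 2)) (blockIndex (n + 2)) := by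
  ext i j
  have hblock : ((j : ℕ) / 2 + (n + 2) - i / 2) % (n + 2) =
      ((blockIndex _ j).1 - (blockIndex _ i).1 : Fin (n + 2)) := by
    rw [Fin.val_sub_eq_mod]
    rfl
  have hparity : (i : ℕ) % 2 = j % 2 ↔ (blockIndex _ i).2 = (blockIndex _ j).2 := by
    simp [Fin.ext_iff]
  simp only [Rcirc, of_apply, hblock, hparity, submatrix_apply, Fin.val_sub_eq_zero_iff,
    Fin.val_sub_eq_pred_iff]
  generalize blockIndex (n + 2) i = p, blockIndex (n + 2) j = q
  obtain ⟨a, r⟩ := p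
  obtain ⟨c, s⟩ := q
  by_cases hac : a = c
  · subst hac
    simp [halfJ]
  · by_cases hshift : a - 1 = c <;> simp [hac, hshift, halfY, PEquiv.toMatrix_apply]

theorem Rcirc_transpose_mul_self (n : ℕ) : (Rcirc (n + 2))ᵀ * Rcirc (n + 2) = 1 := by
  rw [Rcirc_eq_submatrix, transpose_submatrix, submatrix_mul_equiv,
    transpose_mul_self_one_kronecker_add_kronecker (transpose_permMatrix_mul_self _)
      halfJ_transpose_mul_halfY halfJ_transpose_mul_self_add_halfY_transpose_mul_self,
    submatrix_one_equiv]

theorem Rcirc_mulVec_one (n : ℕ) : Rcirc (n + 2) *ᵥ 1 = 1 := by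
  rw [Rcirc_eq_submatrix, submatrix_mulVec_equiv, Pi.one_comp,
    one_kronecker_add_kronecker_mulVec_one halfJ_mulVec_one halfY_mulVec_one]
  rfl

theorem exists_int_two_mul_Rcirc_apply (m : ℕ) (i j : Fin (2 * m)) :
    ∃ z : ℤ, 2 * Rcirc m i j = z := by
  simp only [Rcirc, of_apply]
  split_ifs
  exacts [⟨1, by norm_num⟩, ⟨1, by norm_num⟩, ⟨-1, by norm_num⟩, ⟨0, by norm_num⟩]

theorem Rcirc_zero_zero (n : ℕ) : Rcirc (n + 1) ⟨0, by omega⟩ ⟨0, by omega⟩ = 1 / 2 := by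
  simp [Rcirc]

theorem half_ne_intCast (z : ℤ) : (1 / 2 : ℝ) ≠ z := by
  intro h
  have : (2 * z : ℤ) = 1 := by exact_mod_cast (by linarith : (2 * z : ℝ) = 1)
  omega

/-- For `m ≥ 2`, `Rcirc m` is a regular orthogonal matrix of level 2. -/
theorem stmt_5 (m : ℕ) (hm : 2 ≤ m) :
    (Rcirc m)ᵀ * Rcirc m = 1 ∧
    (Rcirc m).mulVec (fun _ => 1) = (fun _ => 1) ∧
    (∀ i j, ∃ z : ℤ, 2 * Rcirc m i j = (z : ℝ)) ∧
    ¬ (∀ i j, ∃ z : ℤ, Rcirc m i j = (z : ℝ)) := by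
  obtain ⟨n, rfl⟩ := Nat.exists_eq_add_of_le' hm
  refine ⟨Rcirc_transpose_mul_self n, Rcirc_mulVec_one n, exists_int_two_mul_Rcirc_apply _, ?_⟩
  intro h
  obtain ⟨z, hz⟩ := h ⟨0, by omega⟩ ⟨0, by omega⟩
  exact half_ne_intCast z (Rcirc_zero_zero (n + 1) ▸ hz)
end

section
/- Let R be the 8×8 matrix R = (1/2)·[[−I, I, I, I], [I, −Z, I, Z], [I, Z, −Z, I], [I, I, Z, −Z]], where the blocks are 2×2, I is the 2×2 identity matrix and Z = J − I, J being the all-ones 2×2 matrix. Then R is a regular orthogonal matrix of level 2. -/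
open Matrix

set_option maxHeartbeats 4000000 in
/-- The sporadic `8×8` matrix `R_cube = (1/2)[[−I,I,I,I],[I,−Z,I,Z],[I,Z,−Z,I],[I,I,Z,−Z]]`
(`2×2` blocks, `Z = J − I`) is regular orthogonal of level 2. -/
theorem stmt_7 :
    let R : Matrix (Fin 8) (Fin 8) ℝ :=
      (1/2 : ℝ) • !![(-1 : ℝ), 0, 1, 0, 1, 0, 1, 0;
                      0, -1, 0, 1, 0, 1, 0, 1;
                      1, 0, 0, -1, 1, 0, 0, 1;
                      0, 1, -1, 0, 0, 1, 1, 0;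
                      1, 0, 0, 1, 0, -1, 1, 0;
                      0, 1, 1, 0, -1, 0, 0, 1;
                      1, 0, 1, 0, 0, 1, 0, -1;
                      0, 1, 0, 1, 1, 0, -1, 0]
    Rᵀ * R = 1 ∧
    R.mulVec (fun _ => 1) = (fun _ => 1) ∧
    (∀ i j, ∃ z : ℤ, 2 * R i j = (z : ℝ)) ∧
    ¬ (∀ i j, ∃ z : ℤ, R i j = (z : ℝ)) := by
  intro R
  refine ⟨?_, ?_, ?_, ?_⟩
  · ext i j
    rw [Matrix.mul_apply]
    fin_cases i <;> fin_cases j <;>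
      norm_num [R, Fin.sum_univ_succ, Matrix.one_apply, Fin.ext_iff]
  · funext i
    rw [Matrix.mulVec, dotProduct]
    fin_cases i <;>
      norm_num [R, Fin.sum_univ_succ]
  · intro i j
    refine ⟨(!![(-1 : ℤ), 0, 1, 0, 1, 0, 1, 0;
                      0, -1, 0, 1, 0, 1, 0, 1;
                      1, 0, 0, -1, 1, 0, 0, 1;
                      0, 1, -1, 0, 0, 1, 1, 0;
                      1, 0, 0, 1, 0, -1, 1, 0;
                      0, 1, 1, 0, -1, 0, 0, 1;
                      1, 0, 1, 0, 0, 1, 0, -1;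
                      0, 1, 0, 1, 1, 0, -1, 0]) i j, ?_⟩
    fin_cases i <;> fin_cases j <;> norm_num [R]
  · intro h
    obtain ⟨z, hz⟩ := h 0 0
    have h1 : R 0 0 = -(1/2 : ℝ) := by norm_num [R]
    rw [h1] at hz
    have h2 : (2 : ℝ) * (z : ℝ) = -1 := by rw [← hz]; norm_num
    have h3 : (2 * z : ℤ) = -1 := by exact_mod_cast h2
    omega
end

section
/- Let m ≥ 2 and let R₂ₘ = (1/2)·circulant(J, O, …, O, Y) be the 2m×2m block-circulant regular orthogonal matrix with 2×2 blocks, J all-ones, Y = 2I − J. Let v ∈ {0,1}^{2m} be a 0/1 column vector, grouped into m consecutive pairs (v₁,v₂), (v₃,v₄), …, (v_{2m−1}, v_{2m}). Then R₂ₘᵀv is again a 0/1 vector if and only if all pairs contain the same number of ones modulo 2. Moreover, if every pair has an even number of ones (0 or 2), then R₂ₘᵀv = v, and if every pair has exactly one 1, then R₂ₘᵀv = (v₃, v₄, …, v_{2m−1}, v_{2m}, v₁, v₂)ᵀ. -/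
open Matrix

/-- The index `2p + r` of the `r`-th member of the `p`-th pair. -/
noncomputable def pidx {m : ℕ} (p : Fin m) (r : Fin 2) : Fin (2*m) :=
  ⟨2 * (p : ℕ) + (r : ℕ), by have := p.isLt; have := r.isLt; omega⟩

lemma aux_mod (m p t : ℕ) (hm : 1 ≤ m) (hp : p < m) (ht : t < m) :
    ((p + m - t) % m = 0 ↔ t = p) ∧ ((p + m - t) % m = m - 1 ↔ t = (p+1) % m) := by
  have hq : (p+1) % m = 0 ∧ p + 1 = m ∨ (p+1) % m = p+1 ∧ p + 1 < m := by
    rcases Nat.lt_or_ge (p+1) m with h | h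
    · exact Or.inr ⟨Nat.mod_eq_of_lt h, h⟩
    · have h' : p + 1 = m := by omega
      exact Or.inl ⟨by rw [h']; exact Nat.mod_self m, h'⟩
  have hval : (p + m - t) % m = p + m - t ∧ p + m - t < m ∨
      (p + m - t) % m = p + m - t - m ∧ m ≤ p + m - t ∧ p + m - t - m < m := by
    rcases Nat.lt_or_ge (p + m - t) m with h | h
    · exact Or.inl ⟨Nat.mod_eq_of_lt h, h⟩
    · refine Or.inr ⟨?_, h, by omega⟩
      rw [Nat.mod_eq_sub_mod h]
      exact Nat.mod_eq_of_lt (by omega)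
  omega

lemma qchar (m p : ℕ) (hm : 2 ≤ m) (hp : p < m) :
    (p+1) % m = 0 ∧ p + 1 = m ∨ (p+1) % m = p+1 ∧ p + 1 < m := by
  rcases Nat.lt_or_ge (p+1) m with h | h
  · exact Or.inr ⟨Nat.mod_eq_of_lt h, h⟩
  · have h' : p + 1 = m := by omega
    exact Or.inl ⟨by rw [h']; exact Nat.mod_self m, h'⟩

lemma Rcirc_entry (m p r t s : ℕ) (hm : 2 ≤ m) (hp : p < m) (hr : r < 2)
    (ht : t < m) (hs : s < 2) :
    Rcirc m ⟨2*t+s, by omega⟩ ⟨2*p+r, by omega⟩ =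
      if t = p then 1/2 else if t = (p+1)%m then (if s = r then (1:ℝ)/2 else -(1/2)) else 0 := by
  obtain ⟨h0, h1⟩ := aux_mod m p t (by omega) hp ht
  simp only [Rcirc, Matrix.of_apply]
  have e1 : (2*p+r)/2 = p := by omega
  have e2 : (2*t+s)/2 = t := by omega
  have e3 : (2*p+r)%2 = r := by omega
  have e4 : (2*t+s)%2 = s := by omega
  simp only [e1, e2, e3, e4]
  by_cases htp : t = p
  · rw [if_pos (h0.mpr htp), if_pos htp]
  · rw [if_neg (fun hh => htp (h0.mp hh)), if_neg htp]
    by_cases htq : t = (p+1)%m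
    · rw [if_pos (h1.mpr htq), if_pos htq]
    · rw [if_neg (fun hh => htq (h1.mp hh)), if_neg htq]

lemma key (m : ℕ) (hm : 2 ≤ m) (v : Fin (2*m) → ℝ) (p r : ℕ) (hp : p < m) (hr : r < 2) :
    (Rcirc m)ᵀ.mulVec v ⟨2*p+r, by omega⟩ =
      (v ⟨2*p, by omega⟩ + v ⟨2*p+1, by omega⟩
        + v ⟨2*((p+1)%m) + r, by have := Nat.mod_lt (p+1) (show 0 < m by omega); omega⟩
        - v ⟨2*((p+1)%m) + (1-r), by have := Nat.mod_lt (p+1) (show 0 < m by omega); omega⟩) / 2 := by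
  classical
  have hqm : (p+1) % m < m := Nat.mod_lt _ (by omega)
  have hpq : (p+1) % m ≠ p := by
    have := qchar m p hm hp; omega
  set q := (p+1) % m with hqdef
  have hmv : (Rcirc m)ᵀ.mulVec v ⟨2*p+r, by omega⟩ =
      ∑ j : Fin (2*m), Rcirc m j ⟨2*p+r, by omega⟩ * v j := by
    simp [Matrix.mulVec, dotProduct, Matrix.transpose_apply]
  rw [hmv]
  have hb0 : 2*p < 2*m := by omega
  have hb1 : 2*p+1 < 2*m := by omega
  have hb2 : 2*q+r < 2*m := by omega
  have hb3 : 2*q+(1-r) < 2*m := by omega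
  set j0 : Fin (2*m) := ⟨2*p, hb0⟩
  set j1 : Fin (2*m) := ⟨2*p+1, hb1⟩
  set j2 : Fin (2*m) := ⟨2*q+r, hb2⟩
  set j3 : Fin (2*m) := ⟨2*q+(1-r), hb3⟩
  have hsub : ({j0, j1, j2, j3} : Finset (Fin (2*m))) ⊆ Finset.univ := Finset.subset_univ _
  have hzero : ∀ j ∈ Finset.univ, j ∉ ({j0, j1, j2, j3} : Finset (Fin (2*m))) →
      Rcirc m j ⟨2*p+r, by omega⟩ * v j = 0 := by
    intro j _ hj
    simp only [Finset.mem_insert, Finset.mem_singleton, not_or] at hj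
    obtain ⟨n0, n1, n2, n3⟩ := hj
    have hjval : (j : ℕ) = 2*((j:ℕ)/2) + (j:ℕ)%2 := by omega
    have hjt : (j:ℕ)/2 < m := by have := j.isLt; omega
    have hjs : (j:ℕ)%2 < 2 := by omega
    have hjeq : j = ⟨2*((j:ℕ)/2) + (j:ℕ)%2, by omega⟩ := Fin.ext hjval
    rw [hjeq, Rcirc_entry m p r _ _ hm hp hr hjt hjs]
    have d0 : (j:ℕ) ≠ 2*p := fun h => n0 (Fin.ext h)
    have d1 : (j:ℕ) ≠ 2*p+1 := fun h => n1 (Fin.ext h)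
    have d2 : (j:ℕ) ≠ 2*q+r := fun h => n2 (Fin.ext h)
    have d3 : (j:ℕ) ≠ 2*q+(1-r) := fun h => n3 (Fin.ext h)
    rw [if_neg (by omega), if_neg (by omega), zero_mul]
  rw [← Finset.sum_subset hsub hzero]
  have hd01 : j0 ≠ j1 := by simp [j0, j1, Fin.ext_iff]
  have hd02 : j0 ≠ j2 := by simp only [j0, j2, ne_eq, Fin.ext_iff]; omega
  have hd03 : j0 ≠ j3 := by simp only [j0, j3, ne_eq, Fin.ext_iff]; omega
  have hd12 : j1 ≠ j2 := by simp only [j1, j2, ne_eq, Fin.ext_iff]; omega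
  have hd13 : j1 ≠ j3 := by simp only [j1, j3, ne_eq, Fin.ext_iff]; omega
  have hd23 : j2 ≠ j3 := by simp only [j2, j3, ne_eq, Fin.ext_iff]; omega
  rw [Finset.sum_insert (by simp [hd01, hd02, hd03]),
      Finset.sum_insert (by simp [hd12, hd13]),
      Finset.sum_insert (by simp [hd23]),
      Finset.sum_singleton]
  have E0 : Rcirc m j0 ⟨2*p+r, by omega⟩ = 1/2 := by
    have := Rcirc_entry m p r p 0 hm hp hr hp (by omega)
    simpa [j0] using this
  have E1 : Rcirc m j1 ⟨2*p+r, by omega⟩ = 1/2 := by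
    have := Rcirc_entry m p r p 1 hm hp hr hp (by omega)
    simpa [j1] using this
  have E2 : Rcirc m j2 ⟨2*p+r, by omega⟩ = 1/2 := by
    have := Rcirc_entry m p r q r hm hp hr hqm hr
    rw [if_neg hpq, if_pos rfl, if_pos rfl] at this
    simpa [j2] using this
  have E3 : Rcirc m j3 ⟨2*p+r, by omega⟩ = -(1/2) := by
    have := Rcirc_entry m p r q (1-r) hm hp hr hqm (by omega)
    rw [if_neg hpq, if_pos rfl, if_neg (by omega)] at this
    simpa [j3] using this
  rw [E0, E1, E2, E3]
  ring


lemma shift_idx (m p r : ℕ) (hm : 2 ≤ m) (hp : p < m) (hr : r < 2) :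
    (2*p + r + 2) % (2*m) = 2*((p+1)%m) + r := by
  rcases qchar m p hm hp with ⟨h1, h2⟩ | ⟨h1, h2⟩
  · have e : 2*p + r + 2 = 2*m + r := by omega
    rw [h1, e, Nat.add_mod_left, Nat.mod_eq_of_lt (show r < 2*m by omega)]
    omega
  · rw [h1, Nat.mod_eq_of_lt (show 2*p + r + 2 < 2*m by omega)]
    omega

lemma step (m : ℕ) (hm : 2 ≤ m) (v : Fin (2*m) → ℝ) (hv : ∀ i, v i = 0 ∨ v i = 1)
    (H : ∀ i, (Rcirc m)ᵀ.mulVec v i = 0 ∨ (Rcirc m)ᵀ.mulVec v i = 1)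
    (p q : ℕ) (hp : p < m) (hq : q = (p+1)%m) (hqm : q < m) :
    (v ⟨2*p, by omega⟩ = v ⟨2*p+1, by omega⟩ →
      v ⟨2*q, by omega⟩ = v ⟨2*q+1, by omega⟩) ∧
    (v ⟨2*p, by omega⟩ + v ⟨2*p+1, by omega⟩ = 1 →
      v ⟨2*q, by omega⟩ + v ⟨2*q+1, by omega⟩ = 1) := by
  subst hq
  have h0 := H ⟨2*p+0, by omega⟩
  rw [key m hm v p 0 hp (by omega)] at h0
  have h1 := H ⟨2*p+1, by omega⟩
  rw [key m hm v p 1 hp (by omega)] at h1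
  norm_num at h0 h1
  have hvp0 := hv ⟨2*p, by omega⟩
  have hvq0 := hv ⟨2*((p+1)%m), by omega⟩
  have hvq1 := hv ⟨2*((p+1)%m)+1, by omega⟩
  constructor
  · intro h
    rcases hvp0 with ha | ha <;>
      rcases h0 with h0 | h0 <;> rcases h1 with h1 | h1 <;> linarith
  · intro h
    rcases hvq0 with hc | hc <;> rcases hvq1 with hd | hd <;>
      rcases h0 with h0 | h0 <;> rcases h1 with h1 | h1 <;> linarith

lemma chain (m : ℕ) (hm : 2 ≤ m) (v : Fin (2*m) → ℝ) (hv : ∀ i, v i = 0 ∨ v i = 1)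
    (H : ∀ i, (Rcirc m)ᵀ.mulVec v i = 0 ∨ (Rcirc m)ᵀ.mulVec v i = 1) :
    ∀ k (_ : k < m),
      (v ⟨0, by omega⟩ = v ⟨1, by omega⟩ →
        v ⟨2*k, by omega⟩ = v ⟨2*k+1, by omega⟩) ∧
      (v ⟨0, by omega⟩ + v ⟨1, by omega⟩ = 1 →
        v ⟨2*k, by omega⟩ + v ⟨2*k+1, by omega⟩ = 1) := by
  intro k
  induction k with
  | zero => exact fun _ => ⟨fun h => h, fun h => h⟩
  | succ n ih =>
    intro hk
    have hn : n < m := by omega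
    obtain ⟨ih1, ih2⟩ := ih hn
    obtain ⟨s1, s2⟩ := step m hm v hv H n (n+1) hn (Nat.mod_eq_of_lt hk).symm hk
    exact ⟨fun h => s1 (ih1 h), fun h => s2 (ih2 h)⟩

/-- Lemma 'phdaida': for a `0/1` vector `v`, `Rᵀv` is a `0/1` vector iff all the `m` consecutive
pairs of entries of `v` contain the same number of ones modulo 2; if every pair has an even number
of ones then `Rᵀv = v`; if every pair has exactly one `1` then `Rᵀv` is `v` cyclically shifted
forward by one pair. -/
theorem stmt_8 (m : ℕ) (hm : 2 ≤ m) (v : Fin (2*m) → ℝ)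
    (hv : ∀ i, v i = 0 ∨ v i = 1) :
    ((∀ i, (Rcirc m)ᵀ.mulVec v i = 0 ∨ (Rcirc m)ᵀ.mulVec v i = 1) ↔
      ((∀ p : Fin m, v (pidx p 0) = v (pidx p 1)) ∨
       (∀ p : Fin m, v (pidx p 0) + v (pidx p 1) = 1))) ∧
    ((∀ p : Fin m, v (pidx p 0) = v (pidx p 1)) → (Rcirc m)ᵀ.mulVec v = v) ∧
    ((∀ p : Fin m, v (pidx p 0) + v (pidx p 1) = 1) →
      (Rcirc m)ᵀ.mulVec v =
        fun i : Fin (2*m) => v ⟨((i : ℕ) + 2) % (2*m), Nat.mod_lt _ (by omega)⟩) := by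
  have hbr0 : ∀ (p : ℕ) (hp : p < m),
      pidx ⟨p, hp⟩ (0 : Fin 2) = (⟨2*p, by omega⟩ : Fin (2*m)) :=
    fun p hp => Fin.ext (by simp [pidx])
  have hbr1 : ∀ (p : ℕ) (hp : p < m),
      pidx ⟨p, hp⟩ (1 : Fin 2) = (⟨2*p+1, by omega⟩ : Fin (2*m)) :=
    fun p hp => Fin.ext (by simp [pidx])
  have P2 : (∀ p : Fin m, v (pidx p 0) = v (pidx p 1)) → (Rcirc m)ᵀ.mulVec v = v := by
    intro hA
    funext i
    obtain ⟨iv, hiv⟩ := i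
    have hp : iv/2 < m := by omega
    have hr : iv%2 < 2 := by omega
    have hqm : (iv/2+1)%m < m := Nat.mod_lt _ (by omega)
    have hieq : (⟨iv, hiv⟩ : Fin (2*m)) = ⟨2*(iv/2) + iv%2, by omega⟩ := Fin.ext (show iv = 2*(iv/2) + iv%2 by omega)
    rw [hieq, key m hm v (iv/2) (iv%2) hp hr]
    have ha : v ⟨2*(iv/2), by omega⟩ = v ⟨2*(iv/2)+1, by omega⟩ := by
      have := hA ⟨iv/2, hp⟩
      rwa [hbr0 _ hp, hbr1 _ hp] at this
    have hb : v ⟨2*((iv/2+1)%m), by omega⟩ = v ⟨2*((iv/2+1)%m)+1, by omega⟩ := by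
      have := hA ⟨(iv/2+1)%m, hqm⟩
      rwa [hbr0 _ hqm, hbr1 _ hqm] at this
    have hr2 : iv%2 = 0 ∨ iv%2 = 1 := by omega
    rcases hr2 with h | h <;> simp only [h] <;> norm_num <;> linarith
  have P3 : (∀ p : Fin m, v (pidx p 0) + v (pidx p 1) = 1) →
      (Rcirc m)ᵀ.mulVec v =
        fun i : Fin (2*m) => v ⟨((i : ℕ) + 2) % (2*m), Nat.mod_lt _ (by omega)⟩ := by
    intro hB
    funext i
    obtain ⟨iv, hiv⟩ := i
    have hp : iv/2 < m := by omega
    have hr : iv%2 < 2 := by omega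
    have hqm : (iv/2+1)%m < m := Nat.mod_lt _ (by omega)
    show (Rcirc m)ᵀ.mulVec v ⟨iv, hiv⟩ = v ⟨(iv + 2) % (2*m), Nat.mod_lt _ (by omega)⟩
    have hieq : (⟨iv, hiv⟩ : Fin (2*m)) = ⟨2*(iv/2) + iv%2, by omega⟩ := Fin.ext (show iv = 2*(iv/2) + iv%2 by omega)
    rw [hieq, key m hm v (iv/2) (iv%2) hp hr]
    have E : (iv + 2) % (2*m) = 2*((iv/2+1)%m) + iv%2 := by
      have h1 := shift_idx m (iv/2) (iv%2) hm hp hr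
      have h2 : 2*(iv/2) + iv%2 = iv := by omega
      rwa [h2] at h1
    have hridx : v (⟨(iv + 2) % (2*m), Nat.mod_lt _ (by omega)⟩ : Fin (2*m)) =
        v ⟨2*((iv/2+1)%m) + iv%2, by omega⟩ := congrArg v (Fin.ext E)
    rw [hridx]
    have ha : v ⟨2*(iv/2), by omega⟩ + v ⟨2*(iv/2)+1, by omega⟩ = 1 := by
      have := hB ⟨iv/2, hp⟩
      rwa [hbr0 _ hp, hbr1 _ hp] at this
    have hb : v ⟨2*((iv/2+1)%m), by omega⟩ + v ⟨2*((iv/2+1)%m)+1, by omega⟩ = 1 := by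
      have := hB ⟨(iv/2+1)%m, hqm⟩
      rwa [hbr0 _ hqm, hbr1 _ hqm] at this
    have hr2 : iv%2 = 0 ∨ iv%2 = 1 := by omega
    rcases hr2 with h | h <;> simp only [h] <;> norm_num <;> linarith
  refine ⟨⟨?_, ?_⟩, P2, P3⟩
  · intro H
    have hb0 : (0:ℕ) < 2*m := by omega
    have hb1 : (1:ℕ) < 2*m := by omega
    by_cases hc : v ⟨0, hb0⟩ = v ⟨1, hb1⟩
    · left
      intro p
      obtain ⟨c1, _⟩ := chain m hm v hv H p.val p.isLt
      rw [show p = (⟨p.val, p.isLt⟩ : Fin m) from rfl, hbr0 _ p.isLt, hbr1 _ p.isLt]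
      exact c1 hc
    · right
      have hc' : v ⟨0, hb0⟩ + v ⟨1, hb1⟩ = 1 := by
        rcases hv ⟨0, hb0⟩ with h | h <;> rcases hv ⟨1, hb1⟩ with h' | h' <;>
          first
          | linarith
          | (exact absurd (h.trans h'.symm) hc)
      intro p
      obtain ⟨_, c2⟩ := chain m hm v hv H p.val p.isLt
      rw [show p = (⟨p.val, p.isLt⟩ : Fin m) from rfl, hbr0 _ p.isLt, hbr1 _ p.isLt]
      exact c2 hc'
  · rintro (hA | hB)
    · rw [P2 hA]
      exact hv
    · rw [P3 hB]
      intro i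
      exact hv _
end

section
/- Let m ≥ 2 and R₂ₘ = (1/2)·circulant(J, O, …, O, Y) with 2×2 blocks as usual. Let B be a 2m×2m adjacency matrix (symmetric 0/1, zero diagonal), partitioned into 2×2 blocks B_{ij}, such that B' = R₂ₘᵀBR₂ₘ is also an adjacency matrix. Then every 2×2 block B_{ij} contains an even number of ones. -/
/-!
Index rows and columns by pairs `(p, r)` (the index `pidx p r`) and let `S p q` be the sum of the
block `B_{pq}`. As `J/2` has row sums `1` and `Y/2` row sums `0`, `R` fixes `e_(p,0) + e_(p,1)`, so
adding rows `(p,0)` and `(p,1)` of `B' = RᵀBR` in column `(q,0)` gives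
`2 (B'_{(p,0),(q,0)} + B'_{(p,1),(q,0)}) = S p q + S p (q+1) - 2 (B_{(p,0),(q+1,1)} + B_{(p,1),(q+1,1)})`.
Since `B` and `B'` have 0/1 entries, `S p q ≡ S p (q+1) (mod 2)`. Going around the cycle
`q ↦ q + 1`, every block of the `p`-th block row has the parity of the diagonal block, and
`S p p = 2 B_{(p,0),(p,1)}` because `B` is symmetric with zero diagonal.
-/

open Matrix

lemma Nat.mod_eq_ite_of_lt_two_mul {t m : ℕ} (h : t < 2 * m) :
    t % m = if t < m then t else t - m := by
  split_ifs with ht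
  · exact Nat.mod_eq_of_lt ht
  · rw [Nat.mod_eq_sub_mod (not_lt.mp ht), Nat.mod_eq_of_lt (by omega)]

lemma Fin.iff_of_iff_add_one {m : ℕ} [NeZero m] {P : Fin m → Prop} (h : ∀ q, P q ↔ P (q + 1))
    (a b : Fin m) : P a ↔ P b := by
  suffices h0 : ∀ b, P 0 ↔ P b from (h0 a).symm.trans (h0 b)
  obtain ⟨n, rfl⟩ := Nat.exists_eq_succ_of_ne_zero (NeZero.ne m)
  intro b
  induction b using Fin.induction with
  | zero => rfl
  | succ i ih => rw [← Fin.coeSucc_eq_succ]; exact ih.trans (h _)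

lemma sum_pidx {M : Type*} [AddCommMonoid M] {m : ℕ} (f : Fin (2 * m) → M) :
    ∑ i, f i = ∑ p, (f (pidx p 0) + f (pidx p 1)) := by
  let e : Fin m × Fin 2 ≃ Fin (2 * m) := finProdFinEquiv.trans (finCongr (mul_comm m 2))
  have he : ∀ x, e x = pidx x.1 x.2 := fun x => Fin.ext <| by
    simp only [e, Equiv.trans_apply, finCongr_apply, Fin.val_cast, finProdFinEquiv_apply_val, pidx]
    ring
  rw [← e.sum_comp, Fintype.sum_prod_type]
  simp only [he, Fin.sum_univ_two]

lemma Fin.ne_add_one_of_two_le {m : ℕ} [NeZero m] (hm : 2 ≤ m) (q : Fin m) : q ≠ q + 1 := by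
  simp only [ne_eq, left_eq_add, Fin.one_eq_zero_iff]
  omega

section Rcirc

variable {m : ℕ} [NeZero m]

lemma Rcirc_pidx (hm : 2 ≤ m) (p q : Fin m) (r s : Fin 2) :
    Rcirc m (pidx p r) (pidx q s) =
      (if p = q then 1/2 else 0) + (if p = q + 1 then (if r = s then 1/2 else -(1/2)) else 0) := by
  have hp := p.isLt
  have hq := q.isLt
  have hr := r.isLt
  have hs := s.isLt
  have hq1 : ((q + 1 : Fin m) : ℕ) = if (q : ℕ) + 1 < m then (q : ℕ) + 1 else (q : ℕ) + 1 - m := by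
    rw [Fin.val_add, Fin.val_one', Nat.one_mod_eq_one.mpr (by omega),
      Nat.mod_eq_ite_of_lt_two_mul (by omega)]
  simp only [Rcirc, pidx, of_apply, Fin.ext_iff, hq1]
  rw [Nat.mod_eq_ite_of_lt_two_mul (by omega)]
  split_ifs <;> first | omega | norm_num

lemma Rcirc_pidx_zero_add_pidx_one (hm : 2 ≤ m) (p q : Fin m) (r : Fin 2) :
    Rcirc m (pidx p r) (pidx q 0) + Rcirc m (pidx p r) (pidx q 1) = if p = q then 1 else 0 := by
  rcases eq_or_ne p q with rfl | hpq
  · simp only [Rcirc_pidx hm, Fin.ne_add_one_of_two_le hm p, if_true, if_false]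
    norm_num
  · by_cases h : p = q + 1 <;> fin_cases r <;> simp [Rcirc_pidx hm, hpq, h, show m ≠ 1 by omega]

lemma transpose_Rcirc_mul_apply_pidx_add (hm : 2 ≤ m) (M : Matrix (Fin (2 * m)) (Fin (2 * m)) ℝ)
    (p : Fin m) (j : Fin (2 * m)) :
    ((Rcirc m)ᵀ * M) (pidx p 0) j + ((Rcirc m)ᵀ * M) (pidx p 1) j =
      M (pidx p 0) j + M (pidx p 1) j := by
  simp only [mul_apply, transpose_apply, ← Finset.sum_add_distrib, ← add_mul]
  rw [sum_pidx]
  simp [Rcirc_pidx_zero_add_pidx_one hm, Finset.sum_add_distrib]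

lemma mul_Rcirc_apply_pidx_zero (hm : 2 ≤ m) (M : Matrix (Fin (2 * m)) (Fin (2 * m)) ℝ)
    (i : Fin (2 * m)) (q : Fin m) :
    (M * Rcirc m) i (pidx q 0) =
      (M i (pidx q 0) + M i (pidx q 1) + M i (pidx (q + 1) 0) - M i (pidx (q + 1) 1)) / 2 := by
  rw [mul_apply, sum_pidx]
  simp only [Rcirc_pidx hm, mul_add, mul_ite, mul_zero, Finset.sum_add_distrib,
    Finset.sum_ite_eq', Finset.mem_univ, if_true, if_false, one_ne_zero]
  ring

end Rcirc

noncomputable def blockSum {m : ℕ} (B : Matrix (Fin (2 * m)) (Fin (2 * m)) ℝ) (p q : Fin m) : ℝ :=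
  B (pidx p 0) (pidx q 0) + B (pidx p 0) (pidx q 1) +
    B (pidx p 1) (pidx q 0) + B (pidx p 1) (pidx q 1)

section blockSum

variable {m : ℕ} [NeZero m] {B : Matrix (Fin (2 * m)) (Fin (2 * m)) ℝ}

lemma blockSum_add_blockSum_add_one (hm : 2 ≤ m) (p q : Fin m) :
    blockSum B p q + blockSum B p (q + 1) =
      2 * (((Rcirc m)ᵀ * B * Rcirc m) (pidx p 0) (pidx q 0) +
        ((Rcirc m)ᵀ * B * Rcirc m) (pidx p 1) (pidx q 0) +
        B (pidx p 0) (pidx (q + 1) 1) + B (pidx p 1) (pidx (q + 1) 1)) := by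
  rw [Matrix.mul_assoc, transpose_Rcirc_mul_apply_pidx_add hm,
    mul_Rcirc_apply_pidx_zero hm, mul_Rcirc_apply_pidx_zero hm, blockSum, blockSum]
  ring

lemma two_mul_mem_zmultiples_two {b : ℝ} (hb : b = 0 ∨ b = 1) :
    2 * b ∈ AddSubgroup.zmultiples (2 : ℝ) := by
  rcases hb with rfl | rfl <;> simp

lemma blockSum_mem_zmultiples_two_iff_add_one (hm : 2 ≤ m) (hB01 : ∀ i j, B i j = 0 ∨ B i j = 1)
    (hB'01 : ∀ i j, ((Rcirc m)ᵀ * B * Rcirc m) i j = 0 ∨ ((Rcirc m)ᵀ * B * Rcirc m) i j = 1)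
    (p q : Fin m) :
    blockSum B p q ∈ AddSubgroup.zmultiples (2 : ℝ) ↔
      blockSum B p (q + 1) ∈ AddSubgroup.zmultiples (2 : ℝ) := by
  have hsum := blockSum_add_blockSum_add_one (B := B) hm p q
  have hmem : blockSum B p q + blockSum B p (q + 1) ∈ AddSubgroup.zmultiples (2 : ℝ) := by
    simp only [hsum, mul_add]
    refine add_mem (add_mem (add_mem ?_ ?_) ?_) ?_ <;>
      first
        | exact two_mul_mem_zmultiples_two (hB'01 _ _)
        | exact two_mul_mem_zmultiples_two (hB01 _ _)
  exact ⟨fun h => (AddSubgroup.add_mem_cancel_left _ h).mp hmem,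
    fun h => (AddSubgroup.add_mem_cancel_right _ h).mp hmem⟩

end blockSum

lemma blockSum_self_mem_zmultiples_two {m : ℕ} {B : Matrix (Fin (2 * m)) (Fin (2 * m)) ℝ}
    (hBsym : Bᵀ = B) (hB01 : ∀ i j, B i j = 0 ∨ B i j = 1) (hBdiag : ∀ i, B i i = 0)
    (p : Fin m) : blockSum B p p ∈ AddSubgroup.zmultiples (2 : ℝ) := by
  have hB10 : B (pidx p 1) (pidx p 0) = B (pidx p 0) (pidx p 1) := by
    rw [← transpose_apply B, hBsym]
  have : blockSum B p p = 2 * B (pidx p 0) (pidx p 1) := by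
    rw [blockSum, hBdiag, hBdiag, hB10]
    ring
  rw [this]
  exact two_mul_mem_zmultiples_two (hB01 _ _)

theorem stmt_9_general (m : ℕ) (hm : 2 ≤ m) (B : Matrix (Fin (2*m)) (Fin (2*m)) ℝ)
    (hBsym : Bᵀ = B) (hB01 : ∀ i j, B i j = 0 ∨ B i j = 1) (hBdiag : ∀ i, B i i = 0)
    (hB'01 : ∀ i j, ((Rcirc m)ᵀ * B * Rcirc m) i j = 0 ∨ ((Rcirc m)ᵀ * B * Rcirc m) i j = 1) :
    ∀ p q : Fin m, ∃ k : ℤ,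
      B (pidx p 0) (pidx q 0) + B (pidx p 0) (pidx q 1) +
      B (pidx p 1) (pidx q 0) + B (pidx p 1) (pidx q 1) = 2 * (k : ℝ) := by
  have : NeZero m := ⟨by omega⟩
  intro p q
  have hmem : blockSum B p q ∈ AddSubgroup.zmultiples (2 : ℝ) :=
    (Fin.iff_of_iff_add_one (blockSum_mem_zmultiples_two_iff_add_one hm hB01 hB'01 p) p q).mp
      (blockSum_self_mem_zmultiples_two hBsym hB01 hBdiag p)
  obtain ⟨k, hk⟩ := AddSubgroup.mem_zmultiples_iff.mp hmem
  exact ⟨k, by rw [← blockSum, ← hk, zsmul_eq_mul, mul_comm]⟩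

/-- If `B` is an adjacency matrix such that `B' = RᵀBR` is again an adjacency matrix
(`R = Rcirc m`), then every `2×2` block of `B` contains an even number of ones. -/
theorem stmt_9 (m : ℕ) (hm : 2 ≤ m) (B : Matrix (Fin (2*m)) (Fin (2*m)) ℝ)
    (hBsym : Bᵀ = B) (hB01 : ∀ i j, B i j = 0 ∨ B i j = 1) (hBdiag : ∀ i, B i i = 0)
    (hB'sym : ((Rcirc m)ᵀ * B * Rcirc m)ᵀ = (Rcirc m)ᵀ * B * Rcirc m)
    (hB'01 : ∀ i j, ((Rcirc m)ᵀ * B * Rcirc m) i j = 0 ∨ ((Rcirc m)ᵀ * B * Rcirc m) i j = 1)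
    (hB'diag : ∀ i, ((Rcirc m)ᵀ * B * Rcirc m) i i = 0) :
    ∀ p q : Fin m, ∃ k : ℤ,
      B (pidx p 0) (pidx q 0) + B (pidx p 0) (pidx q 1) +
      B (pidx p 1) (pidx q 0) + B (pidx p 1) (pidx q 1) = 2 * (k : ℝ) :=
  stmt_9_general m hm B hBsym hB01 hBdiag hB'01
end

section
/- Let m ≥ 2, R₂ₘ = (1/2)·circulant(J, O, …, O, Y) with 2×2 blocks, and let B be a 2m×2m adjacency matrix partitioned into 2×2 blocks B_{ij} such that RᵀBR is an adjacency matrix, where R = R₂ₘ. If B₁₁ = O (the 2×2 zero block), then B_{ii} = O for all i, and also all diagonal blocks of B' = RᵀBR are zero. -/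
open Matrix

def psucc {m : ℕ} (p : Fin m) : Fin m :=
  ⟨((p : ℕ) + 1) % m, Nat.mod_lt _ (by have := p.isLt; omega)⟩

noncomputable def sg (x y : Fin 2) : ℝ := if x = y then 1 else -1

lemma modsmall {m v : ℕ} (hm : 0 < m) (h : v < 2*m) :
    v % m = if v < m then v else v - m := by
  split_ifs with h1
  · exact Nat.mod_eq_of_lt h1
  · rw [Nat.mod_eq_sub_mod (by omega)]; exact Nat.mod_eq_of_lt (by omega)

lemma psucc_val {m : ℕ} (p : Fin m) :
    ((psucc p : Fin m) : ℕ) = if (p : ℕ) + 1 < m then (p : ℕ) + 1 else 0 := by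
  have hp := p.isLt
  show ((p : ℕ) + 1) % m = _
  rw [modsmall (by omega) (by omega)]
  split_ifs with h1
  · rfl
  · omega

lemma pidx_val {m : ℕ} (p : Fin m) (r : Fin 2) : ((pidx p r : Fin (2*m)) : ℕ) = 2 * (p : ℕ) + (r : ℕ) := rfl

lemma Rcirc_apply {m : ℕ} (hm : 2 ≤ m) (P p : Fin m) (t r : Fin 2) :
    Rcirc m (pidx P t) (pidx p r)
      = if P = p then (1/2 : ℝ)
        else if P = psucc p then (if t = r then 1/2 else -(1/2)) else 0 := by
  have ht := t.isLt; have hr := r.isLt; have hP := P.isLt; have hp := p.isLt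
  have hq := psucc_val p
  simp only [Rcirc, of_apply, pidx_val, Fin.ext_iff, hq]
  have h1 : (2 * (P : ℕ) + (t : ℕ)) / 2 = (P : ℕ) := by omega
  have h2 : (2 * (p : ℕ) + (r : ℕ)) / 2 = (p : ℕ) := by omega
  have h3 : (2 * (P : ℕ) + (t : ℕ)) % 2 = (t : ℕ) := by omega
  have h4 : (2 * (p : ℕ) + (r : ℕ)) % 2 = (r : ℕ) := by omega
  have h5 := modsmall (m := m) (v := (p : ℕ) + m - (P : ℕ)) (by omega) (by omega)
  simp only [h1, h2, h3, h4, h5]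
  split_ifs <;> first | rfl | omega

lemma psucc_ne {m : ℕ} (hm : 2 ≤ m) (p : Fin m) : psucc p ≠ p := by
  have hp := p.isLt; have hq := psucc_val p
  intro hh
  have := congrArg Fin.val hh
  rw [hq] at this
  split_ifs at this <;> omega

lemma sumA {m : ℕ} (hm : 2 ≤ m) (p : Fin m) (r : Fin 2) (g : Fin (2*m) → ℝ) :
    ∑ k, Rcirc m k (pidx p r) * g k
      = (g (pidx p 0) + g (pidx p 1)
         + sg 0 r * g (pidx (psucc p) 0) + sg 1 r * g (pidx (psucc p) 1)) / 2 := by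
  classical
  have hp := p.isLt
  have hq : ((psucc p : Fin m) : ℕ) ≠ (p : ℕ) := fun h => psucc_ne hm p (Fin.ext h)
  have hqlt := (psucc p).isLt
  have hzero : ∀ k : Fin (2*m), k ∉ ({pidx p 0, pidx p 1, pidx (psucc p) 0,
      pidx (psucc p) 1} : Finset (Fin (2*m))) → Rcirc m k (pidx p r) * g k = 0 := by
    intro k hk
    simp only [Finset.mem_insert, Finset.mem_singleton, not_or] at hk
    obtain ⟨h1, h2, h3, h4⟩ := hk
    have hk2 := k.isLt
    have hkd : (k : ℕ) / 2 < m := by omega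
    have hkm : (k : ℕ) % 2 < 2 := by omega
    have n1 : (k : ℕ) ≠ (pidx p 0 : Fin (2*m)).val := fun hh => h1 (Fin.ext hh)
    have n2 : (k : ℕ) ≠ (pidx p 1 : Fin (2*m)).val := fun hh => h2 (Fin.ext hh)
    have n3 : (k : ℕ) ≠ (pidx (psucc p) 0 : Fin (2*m)).val := fun hh => h3 (Fin.ext hh)
    have n4 : (k : ℕ) ≠ (pidx (psucc p) 1 : Fin (2*m)).val := fun hh => h4 (Fin.ext hh)
    simp only [pidx_val, Fin.val_zero, Fin.val_one] at n1 n2 n3 n4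
    have hkeq : k = pidx (⟨(k : ℕ)/2, hkd⟩ : Fin m) (⟨(k : ℕ) % 2, hkm⟩ : Fin 2) := by
      apply Fin.ext; simp only [pidx_val]; omega
    have hz := Rcirc_apply hm (⟨(k : ℕ)/2, hkd⟩ : Fin m) p (⟨(k : ℕ) % 2, hkm⟩ : Fin 2) r
    rw [← hkeq] at hz
    have hA : ¬ (⟨(k : ℕ)/2, hkd⟩ : Fin m) = p := by
      intro hh; have := congrArg Fin.val hh; simp only at this; omega
    have hB : ¬ (⟨(k : ℕ)/2, hkd⟩ : Fin m) = psucc p := by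
      intro hh; have := congrArg Fin.val hh; simp only at this; omega
    rw [hz, if_neg hA, if_neg hB, zero_mul]
  rw [← Finset.sum_subset (Finset.subset_univ ({pidx p 0, pidx p 1, pidx (psucc p) 0,
      pidx (psucc p) 1} : Finset (Fin (2*m)))) (fun k _ hk => hzero k hk)]
  have dd : ∀ (a b : Fin m) (u v : Fin 2), 2 * (a : ℕ) + (u : ℕ) ≠ 2 * (b : ℕ) + (v : ℕ) →
      (pidx a u : Fin (2*m)) ≠ pidx b v := by
    intro a b u v h hh
    exact h (by simpa only [pidx_val] using congrArg Fin.val hh)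
  have d12 : (pidx p 0 : Fin (2*m)) ≠ pidx p 1 := dd _ _ _ _ (by simp)
  have d13 : (pidx p 0 : Fin (2*m)) ≠ pidx (psucc p) 0 := dd _ _ _ _ (by simp; omega)
  have d14 : (pidx p 0 : Fin (2*m)) ≠ pidx (psucc p) 1 := dd _ _ _ _ (by simp; omega)
  have d23 : (pidx p 1 : Fin (2*m)) ≠ pidx (psucc p) 0 := dd _ _ _ _ (by simp; omega)
  have d24 : (pidx p 1 : Fin (2*m)) ≠ pidx (psucc p) 1 := dd _ _ _ _ (by simp; omega)
  have d34 : (pidx (psucc p) 0 : Fin (2*m)) ≠ pidx (psucc p) 1 := dd _ _ _ _ (by simp)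
  rw [Finset.sum_insert (by simp [d12, d13, d14]),
      Finset.sum_insert (by simp [d23, d24]),
      Finset.sum_insert (by simp [d34]), Finset.sum_singleton]
  rw [Rcirc_apply hm, Rcirc_apply hm, Rcirc_apply hm, Rcirc_apply hm]
  rw [if_pos rfl, if_pos rfl, if_neg (psucc_ne hm p), if_pos rfl,
      if_neg (psucc_ne hm p), if_pos rfl]
  simp only [sg]
  split_ifs <;> ring

lemma Bblock {m : ℕ} (hm : 2 ≤ m) (B : Matrix (Fin (2*m)) (Fin (2*m)) ℝ)
    (p q : Fin m) (r s : Fin 2) :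
    ((Rcirc m)ᵀ * B * Rcirc m) (pidx p r) (pidx q s)
      = ( (B (pidx p 0) (pidx q 0) + B (pidx p 1) (pidx q 0)
            + sg 0 r * B (pidx (psucc p) 0) (pidx q 0) + sg 1 r * B (pidx (psucc p) 1) (pidx q 0))
        + (B (pidx p 0) (pidx q 1) + B (pidx p 1) (pidx q 1)
            + sg 0 r * B (pidx (psucc p) 0) (pidx q 1) + sg 1 r * B (pidx (psucc p) 1) (pidx q 1))
        + sg 0 s * (B (pidx p 0) (pidx (psucc q) 0) + B (pidx p 1) (pidx (psucc q) 0)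
            + sg 0 r * B (pidx (psucc p) 0) (pidx (psucc q) 0) + sg 1 r * B (pidx (psucc p) 1) (pidx (psucc q) 0))
        + sg 1 s * (B (pidx p 0) (pidx (psucc q) 1) + B (pidx p 1) (pidx (psucc q) 1)
            + sg 0 r * B (pidx (psucc p) 0) (pidx (psucc q) 1) + sg 1 r * B (pidx (psucc p) 1) (pidx (psucc q) 1))) / 4 := by
  have hg : ∀ l, ((Rcirc m)ᵀ * B) (pidx p r) l
      = (B (pidx p 0) l + B (pidx p 1) l
         + sg 0 r * B (pidx (psucc p) 0) l + sg 1 r * B (pidx (psucc p) 1) l) / 2 := by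
    intro l
    rw [Matrix.mul_apply]
    simp_rw [Matrix.transpose_apply]
    exact sumA hm p r (fun k => B k l)
  rw [Matrix.mul_apply]
  rw [show (∑ l, ((Rcirc m)ᵀ * B) (pidx p r) l * Rcirc m l (pidx q s))
        = ∑ l, Rcirc m l (pidx q s) * ((Rcirc m)ᵀ * B) (pidx p r) l from
      Finset.sum_congr rfl (fun l _ => mul_comm _ _)]
  rw [sumA hm q s (fun l => ((Rcirc m)ᵀ * B) (pidx p r) l)]
  simp only [hg]
  ring

lemma step_s10 {m : ℕ} (hm : 2 ≤ m) (B : Matrix (Fin (2*m)) (Fin (2*m)) ℝ)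
    (hBsym : Bᵀ = B) (hBdiag : ∀ i, B i i = 0)
    (hB'diag : ∀ i, ((Rcirc m)ᵀ * B * Rcirc m) i i = 0)
    (p : Fin m) (hp : ∀ r s : Fin 2, B (pidx p r) (pidx p s) = 0) :
    (∀ r s : Fin 2, B (pidx (psucc p) r) (pidx (psucc p) s) = 0) ∧
    (∀ r s : Fin 2, ((Rcirc m)ᵀ * B * Rcirc m) (pidx p r) (pidx p s) = 0) := by
  have hsym : ∀ i j, B i j = B j i := by
    intro i j
    conv_lhs => rw [← hBsym]
    exact Matrix.transpose_apply B i j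
  have sg00 : sg 0 0 = 1 := if_pos rfl
  have sg11 : sg 1 1 = 1 := if_pos rfl
  have sg01 : sg 0 1 = -1 := if_neg (by decide)
  have sg10 : sg 1 0 = -1 := if_neg (by decide)
  have hd00 : B (pidx (psucc p) 0) (pidx (psucc p) 0) = 0 := hBdiag _
  have hd11 : B (pidx (psucc p) 1) (pidx (psucc p) 1) = 0 := hBdiag _
  have hdsym : B (pidx (psucc p) 1) (pidx (psucc p) 0)
      = B (pidx (psucc p) 0) (pidx (psucc p) 1) := hsym _ _
  have e0 := hB'diag (pidx p 0)
  have e1 := hB'diag (pidx p 1)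
  rw [Bblock hm B p p 0 0] at e0
  rw [Bblock hm B p p 1 1] at e1
  simp only [hp, sg00, sg01, sg10, sg11, hd00, hd11, hdsym] at e0 e1
  have hd01 : B (pidx (psucc p) 0) (pidx (psucc p) 1) = 0 := by linarith
  have hd10 : B (pidx (psucc p) 1) (pidx (psucc p) 0) = 0 := by rw [hdsym]; exact hd01
  have hcr : ∀ t u : Fin 2, B (pidx (psucc p) t) (pidx p u)
      = B (pidx p u) (pidx (psucc p) t) := fun t u => hsym _ _
  constructor
  · intro r s
    fin_cases r <;> fin_cases s
    · exact hd00
    · exact hd01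
    · exact hd10
    · exact hd11
  · have h01 : ((Rcirc m)ᵀ * B * Rcirc m) (pidx p 0) (pidx p 1) = 0 := by
      rw [Bblock hm B p p 0 1]
      simp only [hp, sg00, sg01, sg10, sg11, hd00, hd01, hd10, hd11, hcr]
      ring
    have h10 : ((Rcirc m)ᵀ * B * Rcirc m) (pidx p 1) (pidx p 0) = 0 := by
      rw [Bblock hm B p p 1 0]
      simp only [hp, sg00, sg01, sg10, sg11, hd00, hd01, hd10, hd11, hcr]
      ring
    intro r s
    fin_cases r <;> fin_cases s
    · exact hB'diag _
    · exact h01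
    · exact h10
    · exact hB'diag _

/-- If `B` and `B' = RᵀBR` are adjacency matrices (`R = Rcirc m`) and the first diagonal
`2×2` block of `B` is zero, then all diagonal blocks of `B` and of `B'` are zero. -/
theorem stmt_10 (m : ℕ) (hm : 2 ≤ m) (B : Matrix (Fin (2*m)) (Fin (2*m)) ℝ)
    (hBsym : Bᵀ = B) (hB01 : ∀ i j, B i j = 0 ∨ B i j = 1) (hBdiag : ∀ i, B i i = 0)
    (hB'sym : ((Rcirc m)ᵀ * B * Rcirc m)ᵀ = (Rcirc m)ᵀ * B * Rcirc m)
    (hB'01 : ∀ i j, ((Rcirc m)ᵀ * B * Rcirc m) i j = 0 ∨ ((Rcirc m)ᵀ * B * Rcirc m) i j = 1)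
    (hB'diag : ∀ i, ((Rcirc m)ᵀ * B * Rcirc m) i i = 0)
    (hB11 : ∀ r s : Fin 2, B (pidx ⟨0, by omega⟩ r) (pidx ⟨0, by omega⟩ s) = 0) :
    ∀ p : Fin m, ∀ r s : Fin 2,
      B (pidx p r) (pidx p s) = 0 ∧
      ((Rcirc m)ᵀ * B * Rcirc m) (pidx p r) (pidx p s) = 0 := by
  have key : ∀ n : ℕ, ∀ h : n < m, ∀ r s : Fin 2,
      B (pidx (⟨n, h⟩ : Fin m) r) (pidx (⟨n, h⟩ : Fin m) s) = 0 := by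
    intro n
    induction n with
    | zero => intro h r s; exact hB11 r s
    | succ n ih =>
      intro h r s
      have hn : n < m := by omega
      have hstep := (step_s10 hm B hBsym hBdiag hB'diag ⟨n, hn⟩ (ih hn)).1 r s
      have hps : psucc (⟨n, hn⟩ : Fin m) = (⟨n + 1, h⟩ : Fin m) := by
        apply Fin.ext
        rw [psucc_val]
        simp only
        rw [if_pos h]
      rwa [hps] at hstep
  intro p
  obtain ⟨pv, hpv⟩ := p
  intro r s
  have hp : ∀ r s : Fin 2, B (pidx (⟨pv, hpv⟩ : Fin m) r) (pidx (⟨pv, hpv⟩ : Fin m) s) = 0 :=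
    key pv hpv
  exact ⟨hp r s, (step_s10 hm B hBsym hBdiag hB'diag ⟨pv, hpv⟩ hp).2 r s⟩
end

section
/- Let m ≥ 5 and R = (1/2)·circulant(J, O, …, O, Y) be the 2m×2m block-circulant regular orthogonal matrix with 2×2 blocks, and let B = circulant(O, N, Nᵀ, O, …, O, N, Nᵀ) (with m−5 zero blocks in the middle) where N = [[0,0],[1,1]]. Then B' = RᵀBR is again an adjacency matrix, and in 2×2 blocks: B'_{ii} = O, B'_{i,i+1} = B_{i,i+2}, B'_{i,i+2} = B_{i+1,i+2}, and B'_{ij} = B_{ij} for j ∈ {i+3, …, i+⌊m/2⌋}, block indices taken modulo m. -/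
open Matrix

/-- The block-circulant adjacency matrix `circulant(O, N, Nᵀ, O, …, O, N, Nᵀ)` with
`m−5` zero blocks in the middle and `N = [[0,0],[1,1]]`. -/
noncomputable def Binf2 (m : ℕ) : Matrix (Fin (2*m)) (Fin (2*m)) ℝ :=
  Matrix.of fun i j =>
    if ((j : ℕ)/2 + m - (i : ℕ)/2) % m = 1 ∨ ((j : ℕ)/2 + m - (i : ℕ)/2) % m = m - 2 then
      (if (i : ℕ) % 2 = 1 then 1 else 0)
    else if ((j : ℕ)/2 + m - (i : ℕ)/2) % m = 2 ∨ ((j : ℕ)/2 + m - (i : ℕ)/2) % m = m - 1 then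
      (if (j : ℕ) % 2 = 1 then 1 else 0)
    else 0

/-- Index `2(p mod m) + r` of the `r`-th member of the `p`-th pair (block indices mod `m`). -/
noncomputable def bidx (m : ℕ) (hm : 0 < m) (p : ℕ) (r : Fin 2) : Fin (2*m) :=
  ⟨2 * (p % m) + (r : ℕ), by have := Nat.mod_lt p hm; have := r.isLt; omega⟩

/-- The switched matrix: `N` and `Nᵀ` blocks swapped. -/
noncomputable def Bp (m : ℕ) : Matrix (Fin (2*m)) (Fin (2*m)) ℝ :=
  Matrix.of fun i j =>
    if ((j : ℕ)/2 + m - (i : ℕ)/2) % m = 2 ∨ ((j : ℕ)/2 + m - (i : ℕ)/2) % m = m - 1 then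
      (if (i : ℕ) % 2 = 1 then 1 else 0)
    else if ((j : ℕ)/2 + m - (i : ℕ)/2) % m = 1 ∨ ((j : ℕ)/2 + m - (i : ℕ)/2) % m = m - 2 then
      (if (j : ℕ) % 2 = 1 then 1 else 0)
    else 0

/-- The common product `B·R = R·Bp`. -/
noncomputable def BRfun (m : ℕ) : Matrix (Fin (2*m)) (Fin (2*m)) ℝ :=
  Matrix.of fun i j =>
    if ((j : ℕ)/2 + m - (i : ℕ)/2) % m = 1 ∨ ((j : ℕ)/2 + m - (i : ℕ)/2) % m = m - 2 then
      (if (i : ℕ) % 2 = 1 then 1 else 0) + (if (j : ℕ) % 2 = 1 then 1 else 0) - 1/2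
    else if ((j : ℕ)/2 + m - (i : ℕ)/2) % m = 2 ∨ ((j : ℕ)/2 + m - (i : ℕ)/2) % m = m - 1 then
      1/2
    else 0

lemma sum4 {n : ℕ} (f : Fin n → ℝ) (k0 k1 k2 k3 : Fin n)
    (h01 : k0 ≠ k1) (h02 : k0 ≠ k2) (h03 : k0 ≠ k3)
    (h12 : k1 ≠ k2) (h13 : k1 ≠ k3) (h23 : k2 ≠ k3)
    (hz : ∀ k, k ≠ k0 → k ≠ k1 → k ≠ k2 → k ≠ k3 → f k = 0) :
    Finset.sum Finset.univ f = f k0 + f k1 + f k2 + f k3 := by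
  rw [← Finset.sum_subset (Finset.subset_univ {k0, k1, k2, k3})]
  · rw [show ({k0, k1, k2, k3} : Finset (Fin n)) = insert k0 (insert k1 (insert k2 {k3})) from rfl]
    rw [Finset.sum_insert (by simp [h01, h02, h03]),
        Finset.sum_insert (by simp [h12, h13]),
        Finset.sum_insert (by simp [h23]), Finset.sum_singleton]
    ring
  · intro x _ hx
    simp only [Finset.mem_insert, Finset.mem_singleton, not_or] at hx
    exact hz x hx.1 hx.2.1 hx.2.2.1 hx.2.2.2

lemma off_fact (m a b : ℕ) (_ha : a < m) (hb : b < m) :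
    (a ≤ b ∧ (b + m - a) % m = b - a) ∨ (b < a ∧ (b + m - a) % m = b + m - a) := by
  rcases le_or_gt a b with h | h
  · left
    refine ⟨h, ?_⟩
    have h2 : b + m - a = (b - a) + m := by omega
    rw [h2, Nat.add_mod_right, Nat.mod_eq_of_lt (by omega)]
  · right
    exact ⟨h, Nat.mod_eq_of_lt (by omega)⟩

lemma succ_mod_fact (m b : ℕ) (hb : b < m) :
    (b + 1 < m ∧ (b + 1) % m = b + 1) ∨ (b + 1 = m ∧ (b + 1) % m = 0) := by
  rcases Nat.lt_or_ge (b + 1) m with h | h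
  · exact Or.inl ⟨h, Nat.mod_eq_of_lt h⟩
  · have h1 : b + 1 = m := by omega
    exact Or.inr ⟨h1, by rw [h1, Nat.mod_self]⟩

lemma pred_mod_fact (m a : ℕ) (ha : a < m) (hm : 0 < m) :
    (0 < a ∧ (a + m - 1) % m = a - 1) ∨ (a = 0 ∧ (a + m - 1) % m = m - 1) := by
  rcases Nat.eq_zero_or_pos a with h | h
  · right
    refine ⟨h, ?_⟩
    subst h
    simp only [Nat.zero_add]
    exact Nat.mod_eq_of_lt (by omega)
  · left
    refine ⟨h, ?_⟩
    have h2 : a + m - 1 = (a - 1) + m := by omega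
    rw [h2, Nat.add_mod_right, Nat.mod_eq_of_lt (by omega)]

set_option maxHeartbeats 2000000 in
lemma mul_BR (m : ℕ) (hm : 5 ≤ m) (i j : Fin (2*m)) :
    (Binf2 m * Rcirc m) i j = BRfun m i j := by
  have hi : (i:ℕ) < 2*m := i.isLt
  have hj : (j:ℕ) < 2*m := j.isLt
  have ham : (i:ℕ)/2 < m := by omega
  have hbm : (j:ℕ)/2 < m := by omega
  have hb'f := succ_mod_fact m ((j:ℕ)/2) hbm
  have hb'm : ((j:ℕ)/2 + 1) % m < m := by omega
  rw [Matrix.mul_apply]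
  rw [sum4 _ ⟨2*((j:ℕ)/2), by omega⟩ ⟨2*((j:ℕ)/2)+1, by omega⟩
        ⟨2*(((j:ℕ)/2+1)%m), by omega⟩ ⟨2*(((j:ℕ)/2+1)%m)+1, by omega⟩
        (by simp only [ne_eq, Fin.mk.injEq]; omega)
        (by simp only [ne_eq, Fin.mk.injEq]; omega)
        (by simp only [ne_eq, Fin.mk.injEq]; omega)
        (by simp only [ne_eq, Fin.mk.injEq]; omega)
        (by simp only [ne_eq, Fin.mk.injEq]; omega)
        (by simp only [ne_eq, Fin.mk.injEq]; omega)
        ?_]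
  · have hE := off_fact m ((i:ℕ)/2) ((j:ℕ)/2) ham hbm
    have hE' := off_fact m ((i:ℕ)/2) (((j:ℕ)/2+1)%m) ham hb'm
    have hO1 : ((j:ℕ)/2 + m - 2*((j:ℕ)/2) / 2) % m = 0 := by
      have h1 : 2*((j:ℕ)/2) / 2 = (j:ℕ)/2 := by omega
      have h2 : (j:ℕ)/2 + m - (j:ℕ)/2 = m := by omega
      rw [h1, h2, Nat.mod_self]
    have hO1' : ((j:ℕ)/2 + m - (2*((j:ℕ)/2)+1) / 2) % m = 0 := by
      have h1 : (2*((j:ℕ)/2)+1) / 2 = (j:ℕ)/2 := by omega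
      have h2 : (j:ℕ)/2 + m - (j:ℕ)/2 = m := by omega
      rw [h1, h2, Nat.mod_self]
    have hO2 : ((j:ℕ)/2 + m - 2*(((j:ℕ)/2+1)%m) / 2) % m = m - 1 := by
      have h1 : 2*(((j:ℕ)/2+1)%m) / 2 = ((j:ℕ)/2+1)%m := by omega
      rw [h1]
      rcases off_fact m (((j:ℕ)/2+1)%m) ((j:ℕ)/2) hb'm hbm with ⟨h, h2⟩ | ⟨h, h2⟩ <;> omega
    have hO2' : ((j:ℕ)/2 + m - (2*(((j:ℕ)/2+1)%m)+1) / 2) % m = m - 1 := by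
      have h1 : (2*(((j:ℕ)/2+1)%m)+1) / 2 = ((j:ℕ)/2+1)%m := by omega
      rw [h1]
      rcases off_fact m (((j:ℕ)/2+1)%m) ((j:ℕ)/2) hb'm hbm with ⟨h, h2⟩ | ⟨h, h2⟩ <;> omega
    simp only [Binf2, Rcirc, BRfun, Matrix.of_apply, Fin.val_mk]
    rw [hO1, hO1', hO2, hO2']
    have e1 : 2*((j:ℕ)/2) / 2 = (j:ℕ)/2 := by omega
    have e2 : (2*((j:ℕ)/2)+1) / 2 = (j:ℕ)/2 := by omega
    have e3 : 2*(((j:ℕ)/2+1)%m) / 2 = ((j:ℕ)/2+1)%m := by omega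
    have e4 : (2*(((j:ℕ)/2+1)%m)+1) / 2 = ((j:ℕ)/2+1)%m := by omega
    have p1 : 2*((j:ℕ)/2) % 2 = 0 := by omega
    have p2 : (2*((j:ℕ)/2)+1) % 2 = 1 := by omega
    have p3 : 2*(((j:ℕ)/2+1)%m) % 2 = 0 := by omega
    have p4 : (2*(((j:ℕ)/2+1)%m)+1) % 2 = 1 := by omega
    rw [e1, e2, e3, e4, p1, p2, p3, p4]
    have hE'v : (((j:ℕ)/2 + m - (i:ℕ)/2) % m = m - 1 ∧ (((j:ℕ)/2+1)%m + m - (i:ℕ)/2) % m = 0) ∨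
        (((j:ℕ)/2 + m - (i:ℕ)/2) % m ≠ m - 1 ∧
          (((j:ℕ)/2+1)%m + m - (i:ℕ)/2) % m = ((j:ℕ)/2 + m - (i:ℕ)/2) % m + 1) := by omega
    rcases Nat.mod_two_eq_zero_or_one (i:ℕ) with hr | hr <;>
    rcases Nat.mod_two_eq_zero_or_one (j:ℕ) with hs | hs <;>
    rcases hE'v with ⟨hE1, hE2⟩ | ⟨hE1, hE2⟩ <;>
      simp only [hr, hs, hE2, false_or, or_false, true_or, or_true] <;>
      norm_num <;>
      split_ifs <;>
      first
        | contradiction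
        | omega
        | norm_num
  · intro k hk0 hk1 hk2 hk3
    have h0 : (k:ℕ) ≠ 2*((j:ℕ)/2) := by simpa [Fin.ext_iff] using hk0
    have h1 : (k:ℕ) ≠ 2*((j:ℕ)/2)+1 := by simpa [Fin.ext_iff] using hk1
    have h2 : (k:ℕ) ≠ 2*(((j:ℕ)/2+1)%m) := by simpa [Fin.ext_iff] using hk2
    have h3 : (k:ℕ) ≠ 2*(((j:ℕ)/2+1)%m)+1 := by simpa [Fin.ext_iff] using hk3
    have hkb : (k:ℕ)/2 < m := by have := k.isLt; omega
    have hoff := off_fact m ((k:ℕ)/2) ((j:ℕ)/2) hkb hbm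
    have hR : Rcirc m k j = 0 := by
      simp only [Rcirc, Matrix.of_apply]
      split_ifs <;>
        first
          | rfl
          | contradiction
          | (simp_all only [false_or, or_false, true_or, or_true, not_false_iff]
             omega)
          | omega
          | norm_num
    rw [hR, mul_zero]

lemma add_mod_fact (m x d : ℕ) (hx : x < m) (hd : d < m) :
    (x + d < m ∧ (x + d) % m = x + d) ∨ (m ≤ x + d ∧ (x + d) % m = x + d - m) := by
  rcases Nat.lt_or_ge (x + d) m with h | h
  · exact Or.inl ⟨h, Nat.mod_eq_of_lt h⟩
  · right
    refine ⟨h, ?_⟩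
    have h2 : x + d = (x + d - m) + m := by omega
    conv_lhs => rw [h2]
    rw [Nat.add_mod_right, Nat.mod_eq_of_lt (by omega)]

set_option maxHeartbeats 2000000 in
lemma mul_RBp (m : ℕ) (hm : 5 ≤ m) (i j : Fin (2*m)) :
    (Rcirc m * Bp m) i j = BRfun m i j := by
  have hi : (i:ℕ) < 2*m := i.isLt
  have hj : (j:ℕ) < 2*m := j.isLt
  have ham : (i:ℕ)/2 < m := by omega
  have hbm : (j:ℕ)/2 < m := by omega
  have hpf := pred_mod_fact m ((i:ℕ)/2) ham (by omega)
  have ha'm : ((i:ℕ)/2 + m - 1) % m < m := by omega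
  rw [Matrix.mul_apply]
  rw [sum4 _ ⟨2*((i:ℕ)/2), by omega⟩ ⟨2*((i:ℕ)/2)+1, by omega⟩
        ⟨2*(((i:ℕ)/2 + m - 1)%m), by omega⟩ ⟨2*(((i:ℕ)/2 + m - 1)%m)+1, by omega⟩
        (by simp only [ne_eq, Fin.mk.injEq]; omega)
        (by simp only [ne_eq, Fin.mk.injEq]; omega)
        (by simp only [ne_eq, Fin.mk.injEq]; omega)
        (by simp only [ne_eq, Fin.mk.injEq]; omega)
        (by simp only [ne_eq, Fin.mk.injEq]; omega)
        (by simp only [ne_eq, Fin.mk.injEq]; omega)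
        ?_]
  · have hE := off_fact m ((i:ℕ)/2) ((j:ℕ)/2) ham hbm
    have hE'' := off_fact m (((i:ℕ)/2 + m - 1)%m) ((j:ℕ)/2) ha'm hbm
    have e1 : 2*((i:ℕ)/2) / 2 = (i:ℕ)/2 := by omega
    have e2 : (2*((i:ℕ)/2)+1) / 2 = (i:ℕ)/2 := by omega
    have e3 : 2*(((i:ℕ)/2 + m - 1)%m) / 2 = ((i:ℕ)/2 + m - 1)%m := by omega
    have e4 : (2*(((i:ℕ)/2 + m - 1)%m)+1) / 2 = ((i:ℕ)/2 + m - 1)%m := by omega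
    have p1 : 2*((i:ℕ)/2) % 2 = 0 := by omega
    have p2 : (2*((i:ℕ)/2)+1) % 2 = 1 := by omega
    have p3 : 2*(((i:ℕ)/2 + m - 1)%m) % 2 = 0 := by omega
    have p4 : (2*(((i:ℕ)/2 + m - 1)%m)+1) % 2 = 1 := by omega
    have hO1 : ((i:ℕ)/2 + m - (i:ℕ)/2) % m = 0 := by
      rw [show (i:ℕ)/2 + m - (i:ℕ)/2 = m from by omega, Nat.mod_self]
    have hO2 : (((i:ℕ)/2 + m - 1)%m + m - (i:ℕ)/2) % m = m - 1 := by
      rcases off_fact m ((i:ℕ)/2) (((i:ℕ)/2 + m - 1)%m) ham ha'm with ⟨h, h2⟩ | ⟨h, h2⟩ <;> omega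
    simp only [Rcirc, Bp, BRfun, Matrix.of_apply, Fin.val_mk]
    rw [e1, e2, e3, e4, p1, p2, p3, p4, hO1, hO2]
    have hE''v : (((j:ℕ)/2 + m - (i:ℕ)/2) % m = m - 1 ∧
          ((j:ℕ)/2 + m - ((i:ℕ)/2 + m - 1)%m) % m = 0) ∨
        (((j:ℕ)/2 + m - (i:ℕ)/2) % m ≠ m - 1 ∧
          ((j:ℕ)/2 + m - ((i:ℕ)/2 + m - 1)%m) % m = ((j:ℕ)/2 + m - (i:ℕ)/2) % m + 1) := by
      omega
    rcases Nat.mod_two_eq_zero_or_one (i:ℕ) with hr | hr <;>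
    rcases Nat.mod_two_eq_zero_or_one (j:ℕ) with hs | hs <;>
    rcases hE''v with ⟨hE1, hE2⟩ | ⟨hE1, hE2⟩ <;>
      simp only [hr, hs, hE2, false_or, or_false, true_or, or_true] <;>
      norm_num <;>
      split_ifs <;>
      first
        | contradiction
        | omega
        | norm_num
  · intro k hk0 hk1 hk2 hk3
    have h0 : (k:ℕ) ≠ 2*((i:ℕ)/2) := by simpa [Fin.ext_iff] using hk0
    have h1 : (k:ℕ) ≠ 2*((i:ℕ)/2)+1 := by simpa [Fin.ext_iff] using hk1
    have h2 : (k:ℕ) ≠ 2*(((i:ℕ)/2 + m - 1)%m) := by simpa [Fin.ext_iff] using hk2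
    have h3 : (k:ℕ) ≠ 2*(((i:ℕ)/2 + m - 1)%m)+1 := by simpa [Fin.ext_iff] using hk3
    have hkb : (k:ℕ)/2 < m := by have := k.isLt; omega
    have hoff := off_fact m ((i:ℕ)/2) ((k:ℕ)/2) ham hkb
    have hR : Rcirc m i k = 0 := by
      simp only [Rcirc, Matrix.of_apply]
      split_ifs <;>
        first
          | rfl
          | contradiction
          | (simp_all only [false_or, or_false, true_or, or_true, not_false_iff]
             omega)
          | omega
          | norm_num
    rw [hR, zero_mul]

set_option maxHeartbeats 2000000 in
lemma RtR (m : ℕ) (hm : 5 ≤ m) : (Rcirc m)ᵀ * Rcirc m = 1 := by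
  ext i j
  have hi : (i:ℕ) < 2*m := i.isLt
  have hj : (j:ℕ) < 2*m := j.isLt
  have ham : (i:ℕ)/2 < m := by omega
  have hbm : (j:ℕ)/2 < m := by omega
  have hsf := succ_mod_fact m ((i:ℕ)/2) ham
  have ha'm : ((i:ℕ)/2 + 1) % m < m := by omega
  rw [Matrix.mul_apply]
  have hsum : (fun k => (Rcirc m)ᵀ i k * Rcirc m k j) = fun k => Rcirc m k i * Rcirc m k j := by
    funext k; rw [Matrix.transpose_apply]
  rw [hsum]
  rw [sum4 _ ⟨2*((i:ℕ)/2), by omega⟩ ⟨2*((i:ℕ)/2)+1, by omega⟩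
        ⟨2*(((i:ℕ)/2+1)%m), by omega⟩ ⟨2*(((i:ℕ)/2+1)%m)+1, by omega⟩
        (by simp only [ne_eq, Fin.mk.injEq]; omega)
        (by simp only [ne_eq, Fin.mk.injEq]; omega)
        (by simp only [ne_eq, Fin.mk.injEq]; omega)
        (by simp only [ne_eq, Fin.mk.injEq]; omega)
        (by simp only [ne_eq, Fin.mk.injEq]; omega)
        (by simp only [ne_eq, Fin.mk.injEq]; omega)
        ?_]
  · have hE := off_fact m ((i:ℕ)/2) ((j:ℕ)/2) ham hbm
    have hE2f := off_fact m (((i:ℕ)/2+1)%m) ((j:ℕ)/2) ha'm hbm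
    have e1 : 2*((i:ℕ)/2) / 2 = (i:ℕ)/2 := by omega
    have e2 : (2*((i:ℕ)/2)+1) / 2 = (i:ℕ)/2 := by omega
    have e3 : 2*(((i:ℕ)/2+1)%m) / 2 = ((i:ℕ)/2+1)%m := by omega
    have e4 : (2*(((i:ℕ)/2+1)%m)+1) / 2 = ((i:ℕ)/2+1)%m := by omega
    have p1 : 2*((i:ℕ)/2) % 2 = 0 := by omega
    have p2 : (2*((i:ℕ)/2)+1) % 2 = 1 := by omega
    have p3 : 2*(((i:ℕ)/2+1)%m) % 2 = 0 := by omega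
    have p4 : (2*(((i:ℕ)/2+1)%m)+1) % 2 = 1 := by omega
    have hO1 : ((i:ℕ)/2 + m - (i:ℕ)/2) % m = 0 := by
      rw [show (i:ℕ)/2 + m - (i:ℕ)/2 = m from by omega, Nat.mod_self]
    have hO2 : ((i:ℕ)/2 + m - ((i:ℕ)/2+1)%m) % m = m - 1 := by
      rcases off_fact m (((i:ℕ)/2+1)%m) ((i:ℕ)/2) ha'm ham with ⟨h, h2⟩ | ⟨h, h2⟩ <;> omega
    simp only [Rcirc, Matrix.of_apply, Fin.val_mk, Matrix.one_apply, Fin.ext_iff]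
    rw [e1, e2, e3, e4, p1, p2, p3, p4, hO1, hO2]
    have hE2v : (((j:ℕ)/2 + m - (i:ℕ)/2) % m = 0 ∧
          ((j:ℕ)/2 + m - ((i:ℕ)/2+1)%m) % m = m - 1) ∨
        (((j:ℕ)/2 + m - (i:ℕ)/2) % m ≠ 0 ∧
          ((j:ℕ)/2 + m - ((i:ℕ)/2+1)%m) % m = ((j:ℕ)/2 + m - (i:ℕ)/2) % m - 1) := by
      omega
    rcases Nat.mod_two_eq_zero_or_one (i:ℕ) with hr | hr <;>
    rcases Nat.mod_two_eq_zero_or_one (j:ℕ) with hs | hs <;>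
    rcases hE2v with ⟨hE1, hE2⟩ | ⟨hE1, hE2⟩ <;>
      simp only [hr, hs, hE2, false_or, or_false, true_or, or_true] <;>
      norm_num <;>
      split_ifs <;>
      first
        | contradiction
        | omega
        | norm_num
  · intro k hk0 hk1 hk2 hk3
    have h0 : (k:ℕ) ≠ 2*((i:ℕ)/2) := by simpa [Fin.ext_iff] using hk0
    have h1 : (k:ℕ) ≠ 2*((i:ℕ)/2)+1 := by simpa [Fin.ext_iff] using hk1
    have h2 : (k:ℕ) ≠ 2*(((i:ℕ)/2+1)%m) := by simpa [Fin.ext_iff] using hk2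
    have h3 : (k:ℕ) ≠ 2*(((i:ℕ)/2+1)%m)+1 := by simpa [Fin.ext_iff] using hk3
    have hkb : (k:ℕ)/2 < m := by have := k.isLt; omega
    have hoff := off_fact m ((k:ℕ)/2) ((i:ℕ)/2) hkb ham
    have hR : Rcirc m k i = 0 := by
      simp only [Rcirc, Matrix.of_apply]
      split_ifs <;>
        first
          | rfl
          | contradiction
          | (simp_all only [false_or, or_false, true_or, or_true, not_false_iff]
             omega)
          | omega
          | norm_num
    rw [hR, zero_mul]

lemma main_eq (m : ℕ) (hm : 5 ≤ m) :
    (Rcirc m)ᵀ * Binf2 m * Rcirc m = Bp m := by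
  have h1 : Binf2 m * Rcirc m = Rcirc m * Bp m := by
    ext i j
    rw [mul_BR m hm i j, mul_RBp m hm i j]
  calc (Rcirc m)ᵀ * Binf2 m * Rcirc m
      = (Rcirc m)ᵀ * (Binf2 m * Rcirc m) := by rw [Matrix.mul_assoc]
    _ = (Rcirc m)ᵀ * (Rcirc m * Bp m) := by rw [h1]
    _ = ((Rcirc m)ᵀ * Rcirc m) * Bp m := by rw [Matrix.mul_assoc]
    _ = Bp m := by rw [RtR m hm, Matrix.one_mul]

lemma bidx_val (m : ℕ) (h : 0 < m) (p : ℕ) (r : Fin 2) :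
    ((bidx m h p r : Fin (2*m)) : ℕ) = 2 * (p % m) + (r : ℕ) := rfl

/-- Theorem 'infinite2' of the paper, matrix form: for `m ≥ 5`, `B' = RᵀBR` is again an
adjacency matrix, with `B'_{ii} = O`, `B'_{i,i+1} = B_{i,i+2}`, `B'_{i,i+2} = B_{i+1,i+2}`
and `B'_{ij} = B_{ij}` for `j ∈ {i+3, …, i+⌊m/2⌋}` (block indices mod `m`). -/
theorem stmt_16 (m : ℕ) (hm : 5 ≤ m) :
    (((Rcirc m)ᵀ * Binf2 m * Rcirc m)ᵀ = (Rcirc m)ᵀ * Binf2 m * Rcirc m) ∧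
    (∀ i j, ((Rcirc m)ᵀ * Binf2 m * Rcirc m) i j = 0 ∨
            ((Rcirc m)ᵀ * Binf2 m * Rcirc m) i j = 1) ∧
    (∀ i, ((Rcirc m)ᵀ * Binf2 m * Rcirc m) i i = 0) ∧
    (∀ p : ℕ, ∀ r s : Fin 2,
      ((Rcirc m)ᵀ * Binf2 m * Rcirc m)
          (bidx m (by omega) p r) (bidx m (by omega) p s) = 0 ∧
      ((Rcirc m)ᵀ * Binf2 m * Rcirc m)
          (bidx m (by omega) p r) (bidx m (by omega) (p + 1) s)
        = Binf2 m (bidx m (by omega) p r) (bidx m (by omega) (p + 2) s) ∧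
      ((Rcirc m)ᵀ * Binf2 m * Rcirc m)
          (bidx m (by omega) p r) (bidx m (by omega) (p + 2) s)
        = Binf2 m (bidx m (by omega) (p + 1) r) (bidx m (by omega) (p + 2) s) ∧
      (∀ d : ℕ, 3 ≤ d → d ≤ m/2 →
        ((Rcirc m)ᵀ * Binf2 m * Rcirc m)
            (bidx m (by omega) p r) (bidx m (by omega) (p + d) s)
          = Binf2 m (bidx m (by omega) p r) (bidx m (by omega) (p + d) s))) := by
  rw [main_eq m hm]
  have hm0 : 0 < m := by omega
  refine ⟨?_, ?_, ?_, ?_⟩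
  · -- symmetry
    ext i j
    rw [Matrix.transpose_apply]
    have hi : (i:ℕ) < 2*m := i.isLt
    have hj : (j:ℕ) < 2*m := j.isLt
    have ham : (i:ℕ)/2 < m := by omega
    have hbm : (j:ℕ)/2 < m := by omega
    have hE := off_fact m ((i:ℕ)/2) ((j:ℕ)/2) ham hbm
    have hF := off_fact m ((j:ℕ)/2) ((i:ℕ)/2) hbm ham
    simp only [Bp, Matrix.of_apply]
    split_ifs <;> first | rfl | omega | norm_num
  · -- 0/1 entries
    intro i j
    simp only [Bp, Matrix.of_apply]
    split_ifs <;> norm_num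
  · -- zero diagonal
    intro i
    simp only [Bp, Matrix.of_apply]
    have h0 : ((i:ℕ)/2 + m - (i:ℕ)/2) % m = 0 := by
      rw [show (i:ℕ)/2 + m - (i:ℕ)/2 = m from by omega, Nat.mod_self]
    rw [h0, if_neg (by omega), if_neg (by omega)]
  · -- block identities
    intro p r s
    have hx : p % m < m := Nat.mod_lt p hm0
    have hrl : (r:ℕ) < 2 := r.isLt
    have hsl : (s:ℕ) < 2 := s.isLt
    have hmod : ∀ d : ℕ, d < m → (p + d) % m = (p % m + d) % m := by
      intro d hd
      rw [Nat.add_mod, Nat.mod_eq_of_lt hd]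
    have hy1 := add_mod_fact m (p % m) 1 hx (by omega)
    have hy2 := add_mod_fact m (p % m) 2 hx (by omega)
    have hq1 : (p + 1) % m < m := Nat.mod_lt _ hm0
    have hq2 : (p + 2) % m < m := Nat.mod_lt _ hm0
    have hm1 : (p + 1) % m = (p % m + 1) % m := hmod 1 (by omega)
    have hm2 : (p + 2) % m = (p % m + 2) % m := hmod 2 (by omega)
    have hoff1 : ((p + 1) % m + m - p % m) % m = 1 := by
      rcases off_fact m (p % m) ((p + 1) % m) hx hq1 with ⟨h, h2⟩ | ⟨h, h2⟩ <;> omega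
    have hoff2 : ((p + 2) % m + m - p % m) % m = 2 := by
      rcases off_fact m (p % m) ((p + 2) % m) hx hq2 with ⟨h, h2⟩ | ⟨h, h2⟩ <;> omega
    have hoff12 : ((p + 2) % m + m - (p + 1) % m) % m = 1 := by
      rcases off_fact m ((p + 1) % m) ((p + 2) % m) hq1 hq2 with ⟨h, h2⟩ | ⟨h, h2⟩ <;> omega
    refine ⟨?_, ?_, ?_, ?_⟩
    · -- diagonal block
      simp only [Bp, Matrix.of_apply, bidx_val]
      have ea : (2 * (p % m) + (r:ℕ)) / 2 = p % m := by omega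
      have eb : (2 * (p % m) + (s:ℕ)) / 2 = p % m := by omega
      simp only [ea, eb, show p % m + m - p % m = m from by omega, Nat.mod_self,
        false_or, or_false, true_or, or_true]
      split_ifs <;>
        first
          | rfl
          | contradiction
          | (simp_all only [false_or, or_false, true_or, or_true, not_false_iff]
             omega)
          | omega
          | norm_num
    · -- offset 1 vs offset 2
      simp only [Bp, Binf2, Matrix.of_apply, bidx_val]
      have ea : (2 * (p % m) + (r:ℕ)) / 2 = p % m := by omega
      have eb1 : (2 * ((p + 1) % m) + (s:ℕ)) / 2 = (p + 1) % m := by omega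
      have eb2 : (2 * ((p + 2) % m) + (s:ℕ)) / 2 = (p + 2) % m := by omega
      have pb1 : (2 * ((p + 1) % m) + (s:ℕ)) % 2 = (s:ℕ) := by omega
      have pb2 : (2 * ((p + 2) % m) + (s:ℕ)) % 2 = (s:ℕ) := by omega
      simp only [ea, eb1, eb2, pb1, pb2, hoff1, hoff2, false_or, or_false, true_or, or_true]
      split_ifs <;>
        first
          | rfl
          | contradiction
          | (simp_all only [false_or, or_false, true_or, or_true, not_false_iff]
             omega)
          | omega
          | norm_num
    · -- offset 2 vs offset 1 (shifted)
      simp only [Bp, Binf2, Matrix.of_apply, bidx_val]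
      have ea : (2 * (p % m) + (r:ℕ)) / 2 = p % m := by omega
      have ea1 : (2 * ((p + 1) % m) + (r:ℕ)) / 2 = (p + 1) % m := by omega
      have eb2 : (2 * ((p + 2) % m) + (s:ℕ)) / 2 = (p + 2) % m := by omega
      have pa : (2 * (p % m) + (r:ℕ)) % 2 = (r:ℕ) := by omega
      have pa1 : (2 * ((p + 1) % m) + (r:ℕ)) % 2 = (r:ℕ) := by omega
      simp only [ea, ea1, eb2, pa, pa1, hoff2, hoff12, false_or, or_false, true_or, or_true]
      split_ifs <;>
        first
          | rfl
          | contradiction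
          | (simp_all only [false_or, or_false, true_or, or_true, not_false_iff]
             omega)
          | omega
          | norm_num
    · -- middle offsets
      intro d hd3 hdm
      have hdm' : d < m := by omega
      have hqd : (p + d) % m < m := Nat.mod_lt _ hm0
      have hmd : (p + d) % m = (p % m + d) % m := hmod d hdm'
      have hyd := add_mod_fact m (p % m) d hx hdm'
      have hoffd : ((p + d) % m + m - p % m) % m = d := by
        rcases off_fact m (p % m) ((p + d) % m) hx hqd with ⟨h, h2⟩ | ⟨h, h2⟩ <;> omega
      have hd2 : 2 * d ≤ m := by omega
      simp only [Bp, Binf2, Matrix.of_apply, bidx_val]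
      have ea : (2 * (p % m) + (r:ℕ)) / 2 = p % m := by omega
      have eb : (2 * ((p + d) % m) + (s:ℕ)) / 2 = (p + d) % m := by omega
      simp only [ea, eb, hoffd, false_or, or_false, true_or, or_true]
      split_ifs <;>
        first
          | rfl
          | contradiction
          | (simp_all only [false_or, or_false, true_or, or_true, not_false_iff]
             omega)
          | omega
          | norm_num
end

section
/- Let R be a regular orthogonal matrix of size n, B an n×n adjacency matrix with RᵀBR an adjacency matrix, and W any symmetric 0/1 matrix with zero diagonal of size k. Suppose V is an n×k 0/1 matrix each of whose columns v satisfies that Rᵀv is a 0/1 vector. Then the block matrix A' = [[RᵀBR, RᵀV],[VᵀR, W]] equals QᵀAQ where A = [[B, V],[Vᵀ, W]] and Q = [[R, O],[O, I]], and A' is an adjacency matrix of a graph ℝ-cospectral with the graph of A. -/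
open Matrix

/-- Block form of a level-2 switching: if `R` is regular orthogonal, `B` is an adjacency matrix
with `RᵀBR` an adjacency matrix, `W` is a symmetric `0/1` matrix with zero diagonal, and every
column `v` of the `0/1` matrix `V` satisfies that `Rᵀv` is a `0/1` vector, then
`A' = [[RᵀBR, RᵀV],[VᵀR, W]]` equals `QᵀAQ` with `A = [[B,V],[Vᵀ,W]]`, `Q = diag(R, I)`;
moreover `A'` is an adjacency matrix and `Q` is regular orthogonal. -/
theorem stmt_18 (n k : ℕ) (R B : Matrix (Fin n) (Fin n) ℝ)
    (W : Matrix (Fin k) (Fin k) ℝ) (V : Matrix (Fin n) (Fin k) ℝ)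
    (horth : Rᵀ * R = 1) (hrow : R.mulVec (fun _ => 1) = fun _ => 1)
    (hBsym : Bᵀ = B) (hB01 : ∀ i j, B i j = 0 ∨ B i j = 1) (hBdiag : ∀ i, B i i = 0)
    (hB'sym : (Rᵀ * B * R)ᵀ = Rᵀ * B * R)
    (hB'01 : ∀ i j, (Rᵀ * B * R) i j = 0 ∨ (Rᵀ * B * R) i j = 1)
    (hB'diag : ∀ i, (Rᵀ * B * R) i i = 0)
    (hWsym : Wᵀ = W) (hW01 : ∀ i j, W i j = 0 ∨ W i j = 1) (hWdiag : ∀ i, W i i = 0)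
    (hV01 : ∀ i c, V i c = 0 ∨ V i c = 1)
    (hV' : ∀ c j, Rᵀ.mulVec (fun i => V i c) j = 0 ∨ Rᵀ.mulVec (fun i => V i c) j = 1) :
    Matrix.fromBlocks (Rᵀ * B * R) (Rᵀ * V) (Vᵀ * R) W
      = (Matrix.fromBlocks R 0 0 (1 : Matrix (Fin k) (Fin k) ℝ))ᵀ *
        Matrix.fromBlocks B V Vᵀ W *
        Matrix.fromBlocks R 0 0 (1 : Matrix (Fin k) (Fin k) ℝ) ∧
    ((Matrix.fromBlocks (Rᵀ * B * R) (Rᵀ * V) (Vᵀ * R) W)ᵀ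
      = Matrix.fromBlocks (Rᵀ * B * R) (Rᵀ * V) (Vᵀ * R) W) ∧
    (∀ i j, (Matrix.fromBlocks (Rᵀ * B * R) (Rᵀ * V) (Vᵀ * R) W) i j = 0 ∨
            (Matrix.fromBlocks (Rᵀ * B * R) (Rᵀ * V) (Vᵀ * R) W) i j = 1) ∧
    (∀ i, (Matrix.fromBlocks (Rᵀ * B * R) (Rᵀ * V) (Vᵀ * R) W) i i = 0) ∧
    (Matrix.fromBlocks R 0 0 (1 : Matrix (Fin k) (Fin k) ℝ))ᵀ *
      Matrix.fromBlocks R 0 0 (1 : Matrix (Fin k) (Fin k) ℝ) = 1 ∧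
    (Matrix.fromBlocks R 0 0 (1 : Matrix (Fin k) (Fin k) ℝ)).mulVec (fun _ => 1)
      = fun _ => 1 := by
  have hRV : ∀ j c, (Rᵀ * V) j c = Rᵀ.mulVec (fun i => V i c) j := by
    intro j c; simp [Matrix.mul_apply, Matrix.mulVec]; rfl
  refine ⟨?_, ?_, ?_, ?_, ?_, ?_⟩
  · simp [Matrix.fromBlocks_transpose, Matrix.fromBlocks_multiply, Matrix.mul_assoc]
  · simp [Matrix.fromBlocks_transpose, hB'sym, hWsym, Matrix.transpose_mul]
  · rintro (i | i) (j | j)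
    · exact hB'01 i j
    · rw [Matrix.fromBlocks_apply₁₂, hRV]; exact hV' j i
    · rw [Matrix.fromBlocks_apply₂₁]
      have : (Vᵀ * R) i j = (Rᵀ * V) j i := by
        simp [Matrix.mul_apply, mul_comm]
      rw [this, hRV]; exact hV' i j
    · exact hW01 i j
  · rintro (i | i)
    · exact hB'diag i
    · exact hWdiag i
  · simp [Matrix.fromBlocks_transpose, Matrix.fromBlocks_multiply, horth,
      ← Matrix.fromBlocks_one]
  · funext x
    cases x with
    | inl i =>
      have := congrFun hrow i
      simpa [Matrix.mulVec, Matrix.fromBlocks, dotProduct,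
        Fintype.sum_sum_type] using this
    | inr i =>
      simp [Matrix.mulVec, Matrix.fromBlocks, dotProduct,
        Fintype.sum_sum_type, Matrix.one_apply]
end
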